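/- For every natural number k ≥ 1, ∫_0^1 ln(1 + x) · (ln x)^{k−1} / x dx = (−1)^{k−1} · (k−1)! · (1 − 2^{−k}) · ζ(k+1). -/

import Mathlib

open MeasureTheory Real Set
open scoped Nat

/-!
Expand `log (1 + x) / x = ∑ (-1)ⁿ xⁿ / (n + 1)` and integrate termwise; this is legitimate because
the integrals of the absolute values of the terms are summable. The substitution `x = exp (-t)`
turns `∫₀¹ xⁿ (-log x)ᵐ dx` into the Gamma integral `m! / (n + 1)ᵐ⁺¹`, so the integral becomes
`± m!` times the alternating series `η(m + 2)`, and `η(p) = (1 - 2¹⁻ᵖ) ζ(p)` because the even terms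
of `ζ(p)` add up to `2⁻ᵖ ζ(p)`.
-/

section ExpNegSubstitution

variable {E : Type*} [NormedAddCommGroup E] [NormedSpace ℝ E]

lemma image_exp_neg_Ioi_zero : (fun t : ℝ ↦ exp (-t)) '' Ioi 0 = Ioo 0 1 := by
  ext x
  constructor
  · rintro ⟨t, ht, rfl⟩
    exact ⟨exp_pos _, exp_lt_one_iff.mpr (neg_neg_iff_pos.mpr ht)⟩
  · rintro ⟨h0, h1⟩
    exact ⟨-log x, neg_pos.mpr (log_neg h0 h1), by simp [exp_log h0]⟩

lemma hasDerivAt_exp_neg (t : ℝ) : HasDerivAt (fun t : ℝ ↦ exp (-t)) (-exp (-t)) t := by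
  simpa using (hasDerivAt_neg t).exp

theorem integral_comp_exp_neg_Ioi (g : ℝ → E) :
    ∫ t in Ioi 0, exp (-t) • g (exp (-t)) = ∫ x in Ioo 0 1, g x := by
  rw [← image_exp_neg_Ioi_zero, integral_image_eq_integral_abs_deriv_smul measurableSet_Ioi
    (fun t _ ↦ (hasDerivAt_exp_neg t).hasDerivWithinAt)
    (exp_injective.comp neg_injective).injOn]
  simp only [abs_neg, abs_of_pos (exp_pos _)]

theorem integrableOn_comp_exp_neg_Ioi (g : ℝ → E) :
    IntegrableOn (fun t ↦ exp (-t) • g (exp (-t))) (Ioi 0) ↔ IntegrableOn g (Ioo 0 1) := by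
  rw [← image_exp_neg_Ioi_zero, integrableOn_image_iff_integrableOn_abs_deriv_smul
    measurableSet_Ioi (fun t _ ↦ (hasDerivAt_exp_neg t).hasDerivWithinAt)
    (exp_injective.comp neg_injective).injOn]
  simp only [abs_neg, abs_of_pos (exp_pos _)]

end ExpNegSubstitution

lemma exp_neg_smul_pow_mul_neg_log_pow (n m : ℕ) (t : ℝ) :
    exp (-t) • (exp (-t) ^ n * (-log (exp (-t))) ^ m) = t ^ (m : ℝ) * exp (-((n + 1) * t)) := by
  rw [log_exp, neg_neg, rpow_natCast, smul_eq_mul, ← exp_nat_mul, ← mul_assoc, ← exp_add]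
  ring_nf

theorem integrableOn_pow_mul_neg_log_pow (n m : ℕ) :
    IntegrableOn (fun x : ℝ ↦ x ^ n * (-log x) ^ m) (Ioo 0 1) := by
  rw [← integrableOn_comp_exp_neg_Ioi]
  simp_rw [exp_neg_smul_pow_mul_neg_log_pow, ← neg_mul]
  simpa using integrableOn_rpow_mul_exp_neg_mul_rpow (s := m) (p := 1) (b := n + 1)
    (by linarith [m.cast_nonneg (α := ℝ)]) zero_lt_one (by positivity)

theorem integral_pow_mul_neg_log_pow (n m : ℕ) :
    ∫ x in Ioo 0 1, x ^ n * (-log x) ^ m = m ! / ((n : ℝ) + 1) ^ (m + 1) := by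
  rw [← integral_comp_exp_neg_Ioi]
  simp_rw [exp_neg_smul_pow_mul_neg_log_pow]
  have h := integral_rpow_mul_exp_neg_mul_Ioi (a := m + 1) (r := n + 1)
    (by positivity) (by positivity)
  rw [add_sub_cancel_right] at h
  rw [h, Gamma_nat_eq_factorial, ← Nat.cast_succ m, rpow_natCast, one_div_pow,
    one_div_mul_eq_div]

theorem hasSum_log_one_add_div_self {x : ℝ} (h0 : x ≠ 0) (h : |x| < 1) :
    HasSum (fun n : ℕ ↦ (-1) ^ n / (n + 1) * x ^ n) (log (1 + x) / x) := by
  have hs := ((hasSum_pow_div_log_of_abs_lt_one (x := -x) (by rwa [abs_neg])).neg).div_const x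
  rw [sub_neg_eq_add, neg_neg] at hs
  refine hs.congr_fun fun n ↦ ?_
  rw [neg_pow, pow_succ]
  field_simp
  ring

lemma summable_one_div_natCast_add_one_pow {p : ℕ} (hp : 2 ≤ p) :
    Summable fun n : ℕ ↦ 1 / ((n : ℝ) + 1) ^ p := by
  simpa using (summable_nat_add_iff 1).mpr (summable_one_div_nat_pow.mpr hp)

theorem tsum_neg_one_pow_div_succ_pow {p : ℕ} (hp : 2 ≤ p) :
    ∑' n : ℕ, (-1 : ℝ) ^ n / (n + 1) ^ p = (1 - 2 / 2 ^ p) * ∑' n : ℕ, 1 / ((n : ℝ) + 1) ^ p := by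
  set b : ℕ → ℝ := fun n ↦ 1 / ((n : ℝ) + 1) ^ p
  have hb : Summable b := summable_one_div_natCast_add_one_pow hp
  have hodd : HasSum (fun j ↦ b (2 * j + 1)) ((2 ^ p)⁻¹ * ∑' n, b n) := by
    refine (hb.hasSum.mul_left (2 ^ p)⁻¹).congr_fun fun j ↦ ?_
    simp only [b]
    push_cast
    rw [show (2 * (j : ℝ) + 1 + 1) = 2 * (j + 1) by ring, mul_pow]
    field_simp
  have heven : HasSum (fun j ↦ b (2 * j)) (∑' j, b (2 * j)) :=
    (hb.comp_injective (mul_right_injective₀ two_ne_zero)).hasSum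
  have hsplit := (heven.even_add_odd hodd).unique hb.hasSum
  have halt : HasSum (fun n : ℕ ↦ (-1 : ℝ) ^ n / (n + 1) ^ p)
      (∑' j, b (2 * j) - (2 ^ p)⁻¹ * ∑' n, b n) := by
    refine HasSum.even_add_odd (heven.congr_fun fun j ↦ ?_) (hodd.neg.congr_fun fun j ↦ ?_)
    · simp [b, pow_mul, div_eq_mul_inv]
    · simp [b, pow_succ, pow_mul, div_eq_mul_inv]
  rw [halt.tsum_eq]
  linear_combination hsplit

theorem integral_log_one_add_mul_neg_log_pow_div (m : ℕ) :
    ∫ x in Ioo 0 1, log (1 + x) * (-log x) ^ m / x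
      = m ! * ∑' n : ℕ, (-1 : ℝ) ^ n / (n + 1) ^ (m + 2) := by
  set F : ℕ → ℝ → ℝ := fun n x ↦ (-1) ^ n / (n + 1) * (x ^ n * (-log x) ^ m)
  have hF_int (n : ℕ) : IntegrableOn (F n) (Ioo 0 1) :=
    (integrableOn_pow_mul_neg_log_pow n m).const_mul _
  have hF_integral (n : ℕ) :
      ∫ x in Ioo 0 1, F n x = m ! * ((-1) ^ n / (n + 1) ^ (m + 2)) := by
    rw [integral_const_mul, integral_pow_mul_neg_log_pow]
    field_simp
    ring
  have hF_norm (n : ℕ) : ∫ x in Ioo 0 1, ‖F n x‖ = m ! * (1 / (n + 1) ^ (m + 2)) := by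
    rw [setIntegral_congr_fun measurableSet_Ioo
      (g := fun x ↦ 1 / ((n : ℝ) + 1) * (x ^ n * (-log x) ^ m)), integral_const_mul,
      integral_pow_mul_neg_log_pow]
    · field_simp
      ring
    · rintro x ⟨hx0, hx1⟩
      have h_log : 0 ≤ -log x := neg_nonneg.mpr (log_nonpos hx0.le hx1.le)
      simp only [F]
      rw [norm_mul, norm_div, norm_pow, norm_neg, norm_one, one_pow,
        norm_of_nonneg (by positivity : (0 : ℝ) ≤ n + 1),
        norm_of_nonneg (by positivity : 0 ≤ x ^ n * (-log x) ^ m)]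
  have hF_sum : ∀ x ∈ Ioo 0 1, log (1 + x) * (-log x) ^ m / x = ∑' n, F n x := by
    rintro x ⟨hx0, hx1⟩
    rw [mul_div_right_comm, ← ((hasSum_log_one_add_div_self hx0.ne'
      (by rwa [abs_of_pos hx0])).mul_right _).tsum_eq]
    simp only [F, mul_assoc]
  rw [setIntegral_congr_fun measurableSet_Ioo hF_sum,
    ← integral_tsum_of_summable_integral_norm hF_int ?_]
  · simp_rw [hF_integral, tsum_mul_left]
  · simp_rw [hF_norm]
    exact (summable_one_div_natCast_add_one_pow (by omega)).mul_left _

theorem integral_log_one_add_mul_pow_log (k : ℕ) (hk : 1 ≤ k) :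
    ∫ x in Set.Ioo (0 : ℝ) 1, Real.log (1 + x) * (Real.log x) ^ (k - 1) / x
      = (-1 : ℝ) ^ (k - 1) * ((k - 1).factorial : ℝ) * (1 - 2 ^ (-(k : ℝ))) *
        ∑' n : ℕ, (1 : ℝ) / (n + 1) ^ (k + 1) := by
  obtain ⟨m, rfl⟩ : ∃ m, k = m + 1 := ⟨k - 1, by omega⟩
  have h_integrand (x : ℝ) :
      log (1 + x) * log x ^ m / x = (-1) ^ m * (log (1 + x) * (-log x) ^ m / x) := by
    have h_sq : ((-1 : ℝ) ^ m) * (-1) ^ m = 1 := by rw [← mul_pow]; norm_num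
    rw [neg_pow (log x)]
    linear_combination (-(log (1 + x) * log x ^ m / x)) * h_sq
  have h_two : (2 : ℝ) ^ (-((m + 1 : ℕ) : ℝ)) = 2 / 2 ^ (m + 2) := by
    rw [rpow_neg zero_le_two, rpow_natCast, pow_succ _ (m + 1)]; field_simp
  simp_rw [Nat.add_sub_cancel, h_integrand, integral_const_mul,
    integral_log_one_add_mul_neg_log_pow_div,
    tsum_neg_one_pow_div_succ_pow (by omega : 2 ≤ m + 2), h_two]
  ring
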